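/- arXiv:2201.06414 — 2 statements merged into one kernel-verified Lean document; each statement's English description precedes it below -/
import Mathlib

section
/- Let θ and A be real 2×2 matrices with Aθ = θA, and let ξ ∈ ℝ². For s ∈ ℝ define φ_s : G(θ) → G(θ) by φ_s(t,v) = (t, exp(sA)v + Λ^θ_t Λ^A_s ξ). Then each φ_s is a bijective group homomorphism (automorphism) of G(θ), and φ_{s+s'} = φ_s ∘ φ_{s'} for all s, s' ∈ ℝ. -/
open Matrix

/-- The matrix exponential. -/
noncomputable def mexp (B : Matrix (Fin 2) (Fin 2) ℝ) : Matrix (Fin 2) (Fin 2) ℝ :=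
  NormedSpace.exp B

/-- `Λ^B_t = ∫₀^t exp(sB) ds`, taken entrywise. -/
noncomputable def Lam (B : Matrix (Fin 2) (Fin 2) ℝ) (t : ℝ) : Matrix (Fin 2) (Fin 2) ℝ :=
  Matrix.of fun i j => ∫ s in (0:ℝ)..t, mexp (s • B) i j

/-- The product of the group `G(θ)`:
`(t₁,v₁)·(t₂,v₂) = (t₁+t₂, v₁ + exp(t₁θ)v₂)`. -/
noncomputable def Gmul (θ : Matrix (Fin 2) (Fin 2) ℝ) (x y : ℝ × (Fin 2 → ℝ)) :
    ℝ × (Fin 2 → ℝ) :=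
  (x.1 + y.1, x.2 + mexp (x.1 • θ) *ᵥ y.2)

/-! `Λ^B` is an additive cocycle over `s ↦ exp(sB)`: `Λ^B_{t+u} = Λ^B_t + exp(tB) Λ^B_u`.
Since `A` commutes with `θ`, `exp(sA)` commutes with `exp(tθ)` and with `Λ^θ_t`. Expanding
both sides with these two facts gives the homomorphism and flow identities, and `φ_{-s}`
inverts `φ_s`. -/

section

variable {A : Type*} [NormedRing A] [NormedAlgebra ℝ A] [CompleteSpace A]

theorem intervalIntegral.integral_const_mul_of_intervalIntegrable {f : ℝ → A} {a b : ℝ}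
    (hf : IntervalIntegrable f MeasureTheory.volume a b) (r : A) :
    ∫ x in a..b, r * f x = r * ∫ x in a..b, f x :=
  (ContinuousLinearMap.mul ℝ A r).intervalIntegral_comp_comm hf

theorem intervalIntegral.integral_mul_const_of_intervalIntegrable {f : ℝ → A} {a b : ℝ}
    (hf : IntervalIntegrable f MeasureTheory.volume a b) (r : A) :
    ∫ x in a..b, f x * r = (∫ x in a..b, f x) * r :=
  ((ContinuousLinearMap.mul ℝ A).flip r).intervalIntegral_comp_comm hf

theorem Commute.intervalIntegral_right {f : ℝ → A} {a b : ℝ} {r : A}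
    (hf : IntervalIntegrable f MeasureTheory.volume a b) (h : ∀ x, Commute r (f x)) :
    Commute r (∫ x in a..b, f x) := by
  rw [Commute, SemiconjBy, ← intervalIntegral.integral_const_mul_of_intervalIntegrable hf,
    ← intervalIntegral.integral_mul_const_of_intervalIntegrable hf]
  exact intervalIntegral.integral_congr fun x _ => h x

end

section

attribute [local instance] Matrix.linftyOpNormedRing Matrix.linftyOpNormedAlgebra

theorem mexp_zero : mexp 0 = 1 := NormedSpace.exp_zero

theorem mexp_add_smul (B : Matrix (Fin 2) (Fin 2) ℝ) (t u : ℝ) :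
    mexp ((t + u) • B) = mexp (t • B) * mexp (u • B) := by
  rw [add_smul]
  exact Matrix.exp_add_of_commute _ _ (((Commute.refl B).smul_left t).smul_right u)

theorem Commute.mexp_smul {B C : Matrix (Fin 2) (Fin 2) ℝ} (h : Commute B C) (t u : ℝ) :
    Commute (mexp (t • B)) (mexp (u • C)) :=
  ((h.smul_left t).smul_right u).exp

theorem continuous_mexp_smul (B : Matrix (Fin 2) (Fin 2) ℝ) :
    Continuous fun s : ℝ => mexp (s • B) :=
  NormedSpace.exp_continuous.comp (continuous_id.smul continuous_const)

theorem Lam_eq_intervalIntegral (B : Matrix (Fin 2) (Fin 2) ℝ) (t : ℝ) :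
    Lam B t = ∫ s in (0:ℝ)..t, mexp (s • B) := by
  ext i j
  exact ((Matrix.entryLinearMap ℝ ℝ i j).toContinuousLinearMap.intervalIntegral_comp_comm
    ((continuous_mexp_smul B).intervalIntegrable 0 t))

theorem Lam_zero (B : Matrix (Fin 2) (Fin 2) ℝ) : Lam B 0 = 0 := by
  simp [Lam_eq_intervalIntegral]

theorem Lam_add (B : Matrix (Fin 2) (Fin 2) ℝ) (t u : ℝ) :
    Lam B (t + u) = Lam B t + mexp (t • B) * Lam B u := by
  have hint := (continuous_mexp_smul B).intervalIntegrable (μ := MeasureTheory.volume)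
  simp only [Lam_eq_intervalIntegral]
  rw [← intervalIntegral.integral_add_adjacent_intervals (hint 0 t) (hint t (t + u)),
    ← intervalIntegral.integral_const_mul_of_intervalIntegrable (hint 0 u)]
  simp only [← mexp_add_smul]
  rw [intervalIntegral.integral_comp_add_left (fun s => mexp (s • B)) t, add_zero]

theorem Commute.mexp_smul_Lam {B C : Matrix (Fin 2) (Fin 2) ℝ} (h : Commute B C) (s t : ℝ) :
    Commute (mexp (s • B)) (Lam C t) := by
  rw [Lam_eq_intervalIntegral]
  exact Commute.intervalIntegral_right ((continuous_mexp_smul C).intervalIntegrable 0 t)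
    fun u => h.mexp_smul s u

end

noncomputable def autFlow (θ A : Matrix (Fin 2) (Fin 2) ℝ) (ξ : Fin 2 → ℝ) (s : ℝ)
    (p : ℝ × (Fin 2 → ℝ)) : ℝ × (Fin 2 → ℝ) :=
  (p.1, mexp (s • A) *ᵥ p.2 + Lam θ p.1 *ᵥ (Lam A s *ᵥ ξ))

namespace autFlow

variable {θ A : Matrix (Fin 2) (Fin 2) ℝ} {ξ : Fin 2 → ℝ}

theorem zero : autFlow θ A ξ 0 = id := by
  funext p
  simp [autFlow, Lam_zero, mexp_zero]

theorem add (h : Commute A θ) (s s' : ℝ) :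
    autFlow θ A ξ (s + s') = autFlow θ A ξ s ∘ autFlow θ A ξ s' := by
  funext p
  refine Prod.ext rfl ?_
  simp only [autFlow, Function.comp_apply, Lam_add, mexp_add_smul, Matrix.add_mulVec,
    Matrix.mulVec_add, Matrix.mulVec_mulVec, ← Matrix.mul_assoc,
    (h.mexp_smul_Lam s p.1).eq]
  abel

theorem bijective (h : Commute A θ) (s : ℝ) : Function.Bijective (autFlow θ A ξ s) := by
  refine Function.bijective_iff_has_inverse.2 ⟨autFlow θ A ξ (-s), fun p => ?_, fun p => ?_⟩
  · simpa [zero] using congrFun (add h (-s) s).symm p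
  · simpa [zero] using congrFun (add h s (-s)).symm p

theorem map_Gmul (h : Commute A θ) (s : ℝ) (x y : ℝ × (Fin 2 → ℝ)) :
    autFlow θ A ξ s (Gmul θ x y) = Gmul θ (autFlow θ A ξ s x) (autFlow θ A ξ s y) := by
  refine Prod.ext rfl ?_
  simp only [autFlow, Gmul, Lam_add, Matrix.add_mul, Matrix.add_mulVec, Matrix.mulVec_add,
    Matrix.mulVec_mulVec, ← Matrix.mul_assoc, (h.mexp_smul s x.1).eq]
  abel

end autFlow

theorem stmt6 (θ A : Matrix (Fin 2) (Fin 2) ℝ) (hcomm : A * θ = θ * A)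
    (ξ : Fin 2 → ℝ)
    (φ : ℝ → ℝ × (Fin 2 → ℝ) → ℝ × (Fin 2 → ℝ))
    (hφ : ∀ (s : ℝ) (p : ℝ × (Fin 2 → ℝ)),
      φ s p = (p.1, mexp (s • A) *ᵥ p.2 + Lam θ p.1 *ᵥ (Lam A s *ᵥ ξ))) :
    (∀ s : ℝ, Function.Bijective (φ s) ∧
        ∀ x y : ℝ × (Fin 2 → ℝ), φ s (Gmul θ x y) = Gmul θ (φ s x) (φ s y)) ∧
      ∀ s s' : ℝ, φ (s + s') = φ s ∘ φ s' := by
  obtain rfl : φ = autFlow θ A ξ := funext fun s => funext (hφ s)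
  exact ⟨fun s => ⟨autFlow.bijective hcomm s, autFlow.map_Gmul hcomm s⟩, autFlow.add hcomm⟩
end

section
/- Let θ and A be real 2×2 matrices with Aθ = θA and A ≠ 0, let ξ ∈ ℝ², and let n ∈ ℝ² be nonzero. Let (t,v) ∈ ℝ × ℝ² satisfy F(t,v) ≠ 0, let (a,w) ∈ ℝ × ℝ², and define γ : ℝ → ℝ by γ(s) = F((t,v)·exp_G(s·(a,w))), where the product is taken in G(θ). Then the set {s ∈ ℝ : γ(s) = 0} is discrete: for every s₀ with γ(s₀) = 0 there exists δ > 0 such that γ(s) ≠ 0 for all s with 0 < |s − s₀| < δ. (That is, the exponential curve through a point outside the singular locus either stays off the singular locus or crosses it at a discrete set of times.) -/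
open Matrix

/-- The group exponential of `G(θ)`. -/
noncomputable def expG (θ : Matrix (Fin 2) (Fin 2) ℝ) (p : ℝ × (Fin 2 → ℝ)) :
    ℝ × (Fin 2 → ℝ) :=
  if p.1 = 0 then (0, p.2) else (p.1, p.1⁻¹ • (Lam θ p.1 *ᵥ p.2))

/-- `F(t,v) = ⟨exp(−tθ)(Av + Λ^θ_t ξ), n⟩`. -/
noncomputable def Fu (θ A : Matrix (Fin 2) (Fin 2) ℝ) (ξ n : Fin 2 → ℝ)
    (p : ℝ × (Fin 2 → ℝ)) : ℝ :=
  (mexp ((-p.1) • θ) *ᵥ (A *ᵥ p.2 + Lam θ p.1 *ᵥ ξ)) ⬝ᵥ n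

/-! The curve `γ` is real-analytic in `s` and `γ 0 = F(t, v) ≠ 0`, so by the identity theorem
its zeros are isolated. The only ingredient whose analyticity is not immediate is `s ↦ Λ^θ_s`:
it is the upper-right block of `exp (s • [[θ, 1], [0, 0]])`, since both vanish at `0` and have
derivative `exp (s • θ)`. -/

open NormedSpace Filter Topology Set

attribute [local instance] Matrix.linftyOpNormedRing Matrix.linftyOpNormedAlgebra

section BlockExp

variable {m : Type*} [Fintype m] [DecidableEq m]

theorem Matrix.fromBlocks_zero₂₁_pow (Y B D : Matrix m m ℝ) (k : ℕ) :
    ∃ B', fromBlocks Y B 0 D ^ k = fromBlocks (Y ^ k) B' 0 (D ^ k) := by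
  induction k with
  | zero => exact ⟨0, by simp [fromBlocks_one]⟩
  | succ k ih =>
    obtain ⟨B', h⟩ := ih
    exact ⟨Y ^ k * B + B' * D, by simp [pow_succ, h, fromBlocks_multiply]⟩

theorem Matrix.toBlocks₁₁_exp_fromBlocks_zero₂₁ (Y B D : Matrix m m ℝ) :
    (exp (fromBlocks Y B 0 D)).toBlocks₁₁ = exp Y := by
  ext i j
  have hM := Pi.hasSum.1 (Pi.hasSum.1
    (exp_series_hasSum_exp' (𝕂 := ℝ) (fromBlocks Y B 0 D)) (.inl i)) (.inl j)
  have hY := Pi.hasSum.1 (Pi.hasSum.1 (exp_series_hasSum_exp' (𝕂 := ℝ) Y) i) j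
  refine hM.unique (hY.congr_fun fun k => ?_)
  obtain ⟨B', h⟩ := fromBlocks_zero₂₁_pow Y B D k
  simp [h]

end BlockExp

theorem lam_zero (θ : Matrix (Fin 2) (Fin 2) ℝ) : Lam θ 0 = 0 := by
  ext i j
  simp [Lam]

theorem continuous_mexp_smul_apply (θ : Matrix (Fin 2) (Fin 2) ℝ) (i j : Fin 2) :
    Continuous fun s : ℝ => mexp (s • θ) i j :=
  (exp_continuous.comp (continuous_id.smul continuous_const)).matrix_elem i j

theorem hasDerivAt_lam_apply (θ : Matrix (Fin 2) (Fin 2) ℝ) (i j : Fin 2) (r : ℝ) :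
    HasDerivAt (fun r => Lam θ r i j) (mexp (r • θ) i j) r := by
  have hc := continuous_mexp_smul_apply θ i j
  simpa [Lam] using intervalIntegral.integral_hasDerivAt_right (hc.intervalIntegrable 0 r)
    (hc.stronglyMeasurableAtFilter _ _) hc.continuousAt

theorem hasDerivAt_exp_smul_fromBlocks_apply (θ : Matrix (Fin 2) (Fin 2) ℝ) (i j : Fin 2)
    (r : ℝ) :
    HasDerivAt
      (fun r : ℝ => exp (r • (fromBlocks θ 1 0 0 : Matrix (Fin 2 ⊕ Fin 2) (Fin 2 ⊕ Fin 2) ℝ))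
        (.inl i) (.inr j))
      (mexp (r • θ) i j) r := by
  have h := hasDerivAt_exp_smul_const (𝕂 := ℝ)
    (fromBlocks θ 1 0 0 : Matrix (Fin 2 ⊕ Fin 2) (Fin 2 ⊕ Fin 2) ℝ) r
  refine (hasDerivAt_pi.1 (hasDerivAt_pi.1 h (.inl i)) (.inr j)).congr_deriv ?_
  rw [← fromBlocks_toBlocks (exp _), fromBlocks_multiply, fromBlocks_smul, smul_zero]
  simp only [mexp, fromBlocks_apply₁₂, Matrix.mul_one, Matrix.mul_zero, add_zero]
  exact congrFun (congrFun (Matrix.toBlocks₁₁_exp_fromBlocks_zero₂₁ _ _ _) i) j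

theorem lam_eq_toBlocks₁₂_exp (θ : Matrix (Fin 2) (Fin 2) ℝ) (r : ℝ) :
    Lam θ r =
      (exp (r • (fromBlocks θ 1 0 0 : Matrix (Fin 2 ⊕ Fin 2) (Fin 2 ⊕ Fin 2) ℝ))).toBlocks₁₂ := by
  ext i j
  have hL := hasDerivAt_lam_apply θ i j
  have hE := hasDerivAt_exp_smul_fromBlocks_apply θ i j
  have := eq_of_fderiv_eq (fun r => (hL r).differentiableAt) (fun r => (hE r).differentiableAt)
    (fun r => (hL r).hasFDerivAt.fderiv.trans (hE r).hasFDerivAt.fderiv.symm) 0 (by simp [Lam])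
  exact congrFun this r

section Analytic

variable {x : ℝ}

theorem AnalyticAt.exp_smul_apply {m : Type*} [Fintype m] [DecidableEq m] {u : ℝ → ℝ}
    (hu : AnalyticAt ℝ u x) (N : Matrix m m ℝ) (i j : m) :
    AnalyticAt ℝ (fun s => exp (u s • N) i j) x := by
  have h : AnalyticAt ℝ (fun s => exp (u s • N)) x :=
    (exp_analytic (𝕂 := ℝ) _).comp (hu.smul analyticAt_const)
  exact ((entryLinearMap ℝ ℝ i j).toContinuousLinearMap.analyticAt _).comp h

@[fun_prop]
theorem AnalyticAt.mexp_smul_apply {u : ℝ → ℝ} (hu : AnalyticAt ℝ u x)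
    (θ : Matrix (Fin 2) (Fin 2) ℝ) (i j : Fin 2) :
    AnalyticAt ℝ (fun s => mexp (u s • θ) i j) x :=
  hu.exp_smul_apply θ i j

@[fun_prop]
theorem AnalyticAt.lam_apply {u : ℝ → ℝ} (hu : AnalyticAt ℝ u x)
    (θ : Matrix (Fin 2) (Fin 2) ℝ) (i j : Fin 2) :
    AnalyticAt ℝ (fun s => Lam θ (u s) i j) x := by
  simp only [lam_eq_toBlocks₁₂_exp]
  exact hu.exp_smul_apply _ _ _

theorem AnalyticAt.fu {p : ℝ → ℝ × (Fin 2 → ℝ)} (hp : AnalyticAt ℝ p x)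
    (θ A : Matrix (Fin 2) (Fin 2) ℝ) (ξ n : Fin 2 → ℝ) :
    AnalyticAt ℝ (fun s => Fu θ A ξ n (p s)) x := by
  have h₁ : AnalyticAt ℝ (fun s => (p s).1) x := analyticAt_fst.comp hp
  have h₂ := analyticAt_pi_iff.1 (analyticAt_snd.comp hp)
  simp only [Fu, dotProduct, mulVec, Fin.sum_univ_two, Pi.add_apply]
  fun_prop

theorem AnalyticAt.gmul_left {p : ℝ → ℝ × (Fin 2 → ℝ)} (hp : AnalyticAt ℝ p x)
    (θ : Matrix (Fin 2) (Fin 2) ℝ) (g : ℝ × (Fin 2 → ℝ)) :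
    AnalyticAt ℝ (fun s => Gmul θ g (p s)) x := by
  have h₂ := analyticAt_pi_iff.1 (analyticAt_snd.comp hp)
  refine analyticAt_const.add (analyticAt_fst.comp hp) |>.prod (analyticAt_pi_iff.2 fun i => ?_)
  simp only [Pi.add_apply, mulVec, dotProduct, Fin.sum_univ_two]
  fun_prop

end Analytic

theorem expG_smul (θ : Matrix (Fin 2) (Fin 2) ℝ) (a : ℝ) (w : Fin 2 → ℝ) (s : ℝ) :
    expG θ (s • (a, w)) = (s * a, if a = 0 then s • w else a⁻¹ • (Lam θ (s * a) *ᵥ w)) := by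
  rcases eq_or_ne a 0 with rfl | ha
  · simp [expG]
  rcases eq_or_ne s 0 with rfl | hs
  · simp [expG, lam_zero]
  simp only [expG, Prod.smul_fst, Prod.smul_snd, smul_eq_mul, mul_ne_zero hs ha, if_false, ha,
    mulVec_smul, smul_smul]
  congr 3
  field_simp

theorem analyticAt_expG_smul (θ : Matrix (Fin 2) (Fin 2) ℝ) (a : ℝ) (w : Fin 2 → ℝ) (x : ℝ) :
    AnalyticAt ℝ (fun s => expG θ (s • (a, w))) x := by
  simp only [expG_smul]
  refine analyticAt_id.mul analyticAt_const |>.prod ?_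
  split_ifs
  · fun_prop
  · refine analyticAt_pi_iff.2 fun i => ?_
    simp only [Pi.smul_apply, mulVec, dotProduct, Fin.sum_univ_two, smul_eq_mul]
    fun_prop

theorem AnalyticOnNhd.eventually_ne_zero_of_ne_zero {𝕜 E : Type*} [NontriviallyNormedField 𝕜]
    [PreconnectedSpace 𝕜] [NormedAddCommGroup E] [NormedSpace 𝕜 E] {f : 𝕜 → E}
    (hf : AnalyticOnNhd 𝕜 f univ) {x : 𝕜} (hx : f x ≠ 0) (y : 𝕜) :
    ∀ᶠ z in 𝓝[≠] y, f z ≠ 0 :=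
  (hf y (mem_univ y)).eventually_eq_zero_or_eventually_ne_zero.resolve_left fun h =>
    hx (hf.eqOn_zero_of_preconnected_of_eventuallyEq_zero isPreconnected_univ (mem_univ y) h
      (mem_univ x))

theorem stmt17_general (θ A : Matrix (Fin 2) (Fin 2) ℝ)
    (ξ n : Fin 2 → ℝ)
    (t : ℝ) (v : Fin 2 → ℝ) (hZ : Fu θ A ξ n (t, v) ≠ 0)
    (a : ℝ) (w : Fin 2 → ℝ) (γ : ℝ → ℝ)
    (hγ : ∀ s : ℝ, γ s = Fu θ A ξ n (Gmul θ (t, v) (expG θ (s • ((a, w) : ℝ × (Fin 2 → ℝ)))))) :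
    ∀ s₀ : ℝ, γ s₀ = 0 →
      ∃ δ > 0, ∀ s : ℝ, s ≠ s₀ → |s - s₀| < δ → γ s ≠ 0 := by
  intro s₀ _
  have hγ_an : AnalyticOnNhd ℝ γ univ := fun x _ => by
    rw [funext hγ]
    exact ((analyticAt_expG_smul θ a w x).gmul_left θ (t, v)).fu θ A ξ n
  have hγ₀ : γ 0 ≠ 0 := by
    rw [hγ, expG_smul]
    simpa [Gmul, lam_zero] using hZ
  obtain ⟨δ, hδ, hball⟩ := Metric.eventually_nhds_iff.1
    (eventually_nhdsWithin_iff.1 (hγ_an.eventually_ne_zero_of_ne_zero hγ₀ s₀))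
  exact ⟨δ, hδ, fun s hne hlt => hball (by rwa [Real.dist_eq]) hne⟩

theorem stmt17 (θ A : Matrix (Fin 2) (Fin 2) ℝ) (hcomm : A * θ = θ * A) (hA : A ≠ 0)
    (ξ n : Fin 2 → ℝ) (hn : n ≠ 0)
    (t : ℝ) (v : Fin 2 → ℝ) (hZ : Fu θ A ξ n (t, v) ≠ 0)
    (a : ℝ) (w : Fin 2 → ℝ) (γ : ℝ → ℝ)
    (hγ : ∀ s : ℝ, γ s = Fu θ A ξ n (Gmul θ (t, v) (expG θ (s • ((a, w) : ℝ × (Fin 2 → ℝ)))))) :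
    ∀ s₀ : ℝ, γ s₀ = 0 →
      ∃ δ > 0, ∀ s : ℝ, s ≠ s₀ → |s - s₀| < δ → γ s ≠ 0 :=
  stmt17_general θ A ξ n t v hZ a w γ hγ
end
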